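/- arXiv:1603.01357 — 2 statements merged into one kernel-verified Lean document; each statement's English description precedes it below -/
import Mathlib

section
/- Let X_1,…,X_n be points in ℝ^d and let X ∈ ℝ^d. For k = 1,…,n let c_k(X) denote the number of subsets I ⊆ {1,…,n} with #I = k such that X ∈ conv(X_i : i ∈ I). Then Σ_{k=1}^{n} (−1)^{k−1} c_k(X) equals (−1)^{dim Π} if X lies in the relative interior of Π, and equals 0 if X does not lie in the relative interior of Π, where Π = conv(X_1,…,X_n). -/
open scoped Classical
open Pointwise

/-- The dimension of a set: the dimension of its affine hull. -/
noncomputable def adim {d : ℕ} (s : Set (EuclideanSpace ℝ (Fin d))) : ℕ :=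
  Module.finrank ℝ (affineSpan ℝ s).direction

/-!
Put `Y i = X i - x`, let `L` be the direction of the affine hull of `Π`, and for `I ⊆ [n]` let
`C_I = {a | ∀ i ∈ I, 0 < ⟪Y i, a⟫}`. By Gordan's alternative `x ∉ Π_I` iff `L ∩ C_I ≠ ∅`, so for
`x ∈ Π` the alternating sum equals `S(L) = ∑_I (-1)^{#I} [L ∩ C_I ≠ ∅]`.

If `x` lies on the relative boundary, a supporting `a ∈ L` has `⟪Y i, a⟫ ≥ 0` for all `i` and
`⟪Y j, a⟫ > 0` for some `j`; moving along `a` shows that adding `j` to `I` never changes whether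
`L ∩ C_I` is empty, so the terms cancel in pairs.

If `x` lies in the relative interior, the half-spaces `⟪Y i, ·⟫ > 0` cover `L \ {0}`. For a
relatively open convex `Q` and a linear functional `z` not constant on its affine hull,
`[Q ≠ ∅] + [Q ∩ {z = 0} ≠ ∅] = [Q ∩ {z > 0} ≠ ∅] + [Q ∩ {z < 0} ≠ ∅]`. Summed over `I`, this shows
by induction on the number of half-spaces that `S` vanishes on every relatively open convex region
covered by them, and then that `S(L) = -S(L ∩ z^⊥)` for any `z ∈ L \ {0}`; hence
`S(L) = (-1)^{dim L}`.
-/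

open scoped RealInnerProductSpace

section ConvexGeometry

variable {E : Type*} [NormedAddCommGroup E] [InnerProductSpace ℝ E]

theorem forall_mem_convexHull_inner_sub_mem {S : Set E} {x a : E} {r : Set ℝ} (hr : Convex ℝ r)
    (h : ∀ y ∈ S, ⟪y - x, a⟫ ∈ r) : ∀ y ∈ convexHull ℝ S, ⟪y - x, a⟫ ∈ r := by
  refine convexHull_min h fun y hy w hw s t hs ht hst => ?_
  have hcomb : s • y + t • w - x = s • (y - x) + t • (w - x) := by
    rw [smul_sub, smul_sub, sub_add_sub_comm, ← add_smul, hst, one_smul]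
  show ⟪s • y + t • w - x, a⟫ ∈ r
  rw [hcomb, inner_add_left, real_inner_smul_left, real_inner_smul_left]
  exact hr hy hw hs ht hst

theorem Set.Finite.mem_convexHull_iff_not_exists_inner_pos [CompleteSpace E] {S : Set E}
    (hS : S.Finite) {x : E} : x ∈ convexHull ℝ S ↔ ¬∃ a, ∀ y ∈ S, 0 < ⟪y - x, a⟫ := by
  constructor
  · rintro hx ⟨a, ha⟩
    simpa using forall_mem_convexHull_inner_sub_mem (convex_Ioi 0) ha x hx
  · intro h
    by_contra hx
    obtain ⟨f, u, hfx, hfS⟩ := geometric_hahn_banach_point_closed (convex_convexHull ℝ S)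
      (hS.isClosed_convexHull ℝ) hx
    refine h ⟨(InnerProductSpace.toDual ℝ E).symm f, fun y hy => ?_⟩
    rw [real_inner_comm, InnerProductSpace.toDual_symm_apply, map_sub, sub_pos]
    exact hfx.trans (hfS y (subset_convexHull ℝ S hy))

theorem AffineSubspace.coe_inf_orthogonal_singleton (A : AffineSubspace ℝ E) (z : E) :
    ((A ⊓ (ℝ ∙ z)ᗮ.toAffineSubspace : AffineSubspace ℝ E) : Set E) =
      (A : Set E) ∩ {a | ⟪z, a⟫ = 0} := by
  ext a
  simp [AffineSubspace.mem_inf_iff, Submodule.mem_toAffineSubspace,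
    Submodule.mem_orthogonal_singleton_iff_inner_right]

theorem AffineSubspace.forall_inner_pos_or_forall_inner_nonpos (A : AffineSubspace ℝ E) {z : E}
    (hz : ∀ v ∈ A.direction, ⟪z, v⟫ = 0) : (∀ a ∈ A, 0 < ⟪z, a⟫) ∨ ∀ a ∈ A, ⟪z, a⟫ ≤ 0 := by
  rcases (A : Set E).eq_empty_or_nonempty with hA | ⟨p, hp⟩
  · simp [← SetLike.mem_coe, hA]
  have hval : ∀ a ∈ A, ⟪z, a⟫ = ⟪z, p⟫ := fun a ha => by
    have := hz _ (A.vsub_mem_direction ha hp)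
    rwa [vsub_eq_sub, inner_sub_right, sub_eq_zero] at this
  rcases lt_or_ge 0 ⟪z, p⟫ with hpos | hnonpos
  · exact Or.inl fun a ha => hval a ha ▸ hpos
  · exact Or.inr fun a ha => hval a ha ▸ hnonpos

theorem sub_mem_direction_affineSpan {s : Set E} {x y : E} (hy : y ∈ s) (hx : x ∈ s) :
    y - x ∈ (affineSpan ℝ s).direction := by
  rw [direction_affineSpan]
  exact vsub_mem_vectorSpan ℝ hy hx

theorem eq_zero_of_forall_inner_sub_eq_zero {s : Set E} {x a : E} (hx : x ∈ s)
    (ha : a ∈ (affineSpan ℝ s).direction) (h : ∀ y ∈ s, ⟪y - x, a⟫ = 0) : a = 0 := by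
  rw [direction_affineSpan, vectorSpan_eq_span_vsub_set_right ℝ hx] at ha
  have hker : Submodule.span ℝ ((· -ᵥ x) '' s) ≤ LinearMap.ker (innerₛₗ ℝ a) :=
    Submodule.span_le.mpr <| by
      rintro _ ⟨y, hy, rfl⟩
      simpa [real_inner_comm] using h y hy
  simpa using hker ha

theorem eq_zero_of_mem_intrinsicInterior_of_forall_inner_sub_nonneg {s : Set E} {x a : E}
    (hx : x ∈ intrinsicInterior ℝ s) (ha : a ∈ (affineSpan ℝ s).direction)
    (h : ∀ y ∈ s, 0 ≤ ⟪y - x, a⟫) : a = 0 := by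
  obtain ⟨p, hp, rfl⟩ := mem_intrinsicInterior.mp hx
  set γ : ℝ → affineSpan ℝ s := fun t =>
    ⟨(-t) • a +ᵥ (p : E), AffineSubspace.vadd_mem_of_mem_direction (Submodule.smul_mem _ _ ha) p.2⟩
  have hγ : Continuous γ := by fun_prop
  have hγ0 : γ 0 = p := by ext; simp [γ]
  have hnhds : ∀ᶠ t in nhdsWithin 0 (Set.Ioi 0), 0 < t ∧ γ t ∈ interior ((↑) ⁻¹' s) :=
    eventually_mem_nhdsWithin.and <| nhdsWithin_le_nhds <|
      hγ.continuousAt.preimage_mem_nhds (hγ0 ▸ isOpen_interior.mem_nhds hp)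
  obtain ⟨t, ht, hts⟩ := hnhds.exists
  have hts' : γ t ∈ (↑) ⁻¹' s := interior_subset hts
  have := h _ hts'
  rw [show (γ t : E) = -t • a + p from rfl, add_sub_cancel_right, real_inner_smul_left] at this
  exact real_inner_self_nonpos.mp (nonpos_of_mul_nonneg_right this (neg_neg_of_pos ht))

theorem mem_intrinsicInterior_of_zero_mem_interior {s : Set E} {x : E} (hx : x ∈ s)
    (h0 : (0 : (affineSpan ℝ s).direction) ∈
      interior {v : (affineSpan ℝ s).direction | x + v ∈ s}) :
    x ∈ intrinsicInterior ℝ s := by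
  set L := (affineSpan ℝ s).direction
  let φ : L →ᵃⁱ[ℝ] E :=
    (AffineIsometryEquiv.constVAdd ℝ E x).toAffineIsometry.comp L.subtypeₗᵢ.toAffineIsometry
  have hφ : ∀ v : L, φ v = x + v := fun v => rfl
  have hφs : φ '' {v : L | x + v ∈ s} = s := by
    exact Set.image_preimage_eq_of_subset fun y hy =>
      ⟨⟨y - x, sub_mem_direction_affineSpan hy hx⟩, by simp [hφ]⟩
  rw [← hφs, AffineIsometry.intrinsicInterior_image]
  exact ⟨0, interior_subset_intrinsicInterior h0, by simp [hφ]⟩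

theorem span_setOf_add_mem_eq_top {s : Set E} {x : E} (hx : x ∈ s) :
    Submodule.span ℝ {v : (affineSpan ℝ s).direction | x + v ∈ s} = ⊤ := by
  set L := (affineSpan ℝ s).direction
  refine Submodule.map_injective_of_injective L.injective_subtype ?_
  have himage : L.subtype '' {v : L | x + v ∈ s} = (· -ᵥ x) '' s := by
    ext v
    constructor
    · rintro ⟨v, hv, rfl⟩
      exact ⟨x + v, hv, by simp⟩
    · rintro ⟨y, hy, rfl⟩
      exact ⟨⟨y - x, sub_mem_direction_affineSpan hy hx⟩, by simpa using hy, rfl⟩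
  rw [Submodule.map_span, Submodule.map_subtype_top, himage,
    ← vectorSpan_eq_span_vsub_set_right ℝ hx, ← direction_affineSpan]

theorem Convex.mem_intrinsicInterior_of_forall_inner_sub_nonneg [FiniteDimensional ℝ E]
    {s : Set E} (hs : Convex ℝ s) {x : E} (hx : x ∈ s)
    (h : ∀ a ∈ (affineSpan ℝ s).direction, (∀ y ∈ s, 0 ≤ ⟪y - x, a⟫) → a = 0) :
    x ∈ intrinsicInterior ℝ s := by
  set L := (affineSpan ℝ s).direction
  set K := {v : L | x + v ∈ s}
  have hK : Convex ℝ K := (hs.translate_preimage_right x).linear_preimage L.subtype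
  have h0K : (0 : L) ∈ K := by simpa [K] using hx
  have hint : (interior K).Nonempty := by
    rw [hK.interior_nonempty_iff_affineSpan_eq_top,
      AffineSubspace.affineSpan_eq_top_iff_vectorSpan_eq_top_of_nonempty ℝ L L ⟨0, h0K⟩,
      vectorSpan_eq_span_vsub_set_right ℝ h0K]
    simpa using span_setOf_add_mem_eq_top hx
  refine mem_intrinsicInterior_of_zero_mem_interior hx (by_contra fun h0 => ?_)
  -- a functional supporting `K` at `0` would be a nonzero `a ∈ L` violating `h`
  obtain ⟨f, hf, hfK⟩ := geometric_hahn_banach_of_nonempty_interior_point hK h0 hint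
  set a := (InnerProductSpace.toDual ℝ L).symm f
  have ha : (a : E) = 0 := neg_eq_zero.mp <| h _ (L.neg_mem a.2) fun y hy => by
    have := hfK ⟨y - x, sub_mem_direction_affineSpan hy hx⟩ (by simp [K, hy])
    rw [map_zero, ← InnerProductSpace.toDual_symm_apply] at this
    rw [inner_neg_right, real_inner_comm, neg_nonneg]
    exact this
  exact hf (by simpa [a] using ha)

end ConvexGeometry

namespace Cowan

variable {E ι : Type*} [NormedAddCommGroup E] [InnerProductSpace ℝ E]

noncomputable def ind (P : Prop) : ℤ := if P then 1 else 0

theorem ind_congr {P Q : Prop} (h : P ↔ Q) : ind P = ind Q := by rw [h]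

theorem ind_not (P : Prop) : ind (¬P) = 1 - ind P := by
  by_cases h : P <;> simp [ind, h]

def posCone (Y : ι → E) (T : Finset ι) : Set E := {a | ∀ i ∈ T, 0 < ⟪Y i, a⟫}

theorem posCone_insert (Y : ι → E) (T : Finset ι) (j : ι) :
    posCone Y (insert j T) = {a | 0 < ⟪Y j, a⟫} ∩ posCone Y T := by
  ext a
  simp [posCone]

theorem isOpen_posCone (Y : ι → E) (T : Finset ι) : IsOpen (posCone Y T) := by
  simp only [posCone, Set.ofPred_forall]
  exact isOpen_biInter_finset fun i _ => isOpen_lt continuous_const (by fun_prop)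

theorem convex_posCone (Y : ι → E) (T : Finset ι) : Convex ℝ (posCone Y T) := by
  simp only [posCone, Set.ofPred_forall]
  exact convex_iInter₂ fun i _ => convex_halfSpace_gt (innerₛₗ ℝ (Y i)).isLinear 0

theorem inter_posCone_nonempty_iff (W : Submodule ℝ E) [W.HasOrthogonalProjection]
    {Y : ι → E} {T : Finset ι} (hY : ∀ i ∈ T, Y i ∈ W) :
    ((W : Set E) ∩ posCone Y T).Nonempty ↔ (posCone Y T).Nonempty := by
  refine ⟨fun ⟨a, _, ha⟩ => ⟨a, ha⟩, fun ⟨a, ha⟩ =>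
    ⟨W.starProjection a, W.starProjection_apply_mem a, fun i hi => ?_⟩⟩
  rw [← Submodule.inner_starProjection_left_eq_right,
    Submodule.starProjection_eq_self_iff.mpr (hY i hi)]
  exact ha i hi

/-- For nonempty `Ω` this is one minus the Euler characteristic of the nerve of the cover of
`Ω ∩ ⋃ i ∈ G, {a | 0 < ⟪Y i, a⟫}` by these half-spaces. -/
noncomputable def nerveSum (G : Finset ι) (Y : ι → E) (Ω : Set E) : ℤ :=
  ∑ T ∈ G.powerset, (-1) ^ T.card * ind (Ω ∩ posCone Y T).Nonempty

@[simp]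
theorem nerveSum_empty (G : Finset ι) (Y : ι → E) : nerveSum G Y ∅ = 0 := by
  simp [nerveSum, ind]

theorem nerveSum_singleton_zero (G : Finset ι) (Y : ι → E) : nerveSum G Y {0} = 1 := by
  rw [nerveSum, Finset.sum_eq_single_of_mem ∅ (Finset.empty_mem_powerset G)]
  · simp [ind, posCone]
  · intro T _ hT
    obtain ⟨i, hi⟩ := Finset.nonempty_iff_ne_empty.mpr hT
    have hempty : ¬({0} ∩ posCone Y T).Nonempty := by
      rintro ⟨a, rfl, ha⟩
      simpa using ha i hi
    simp [ind, hempty]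

theorem nerveSum_insert {G : Finset ι} {j : ι} (hj : j ∉ G) (Y : ι → E) (Ω : Set E) :
    nerveSum (insert j G) Y Ω = nerveSum G Y Ω - nerveSum G Y (Ω ∩ {a | 0 < ⟪Y j, a⟫}) := by
  rw [nerveSum, Finset.sum_powerset_insert hj, nerveSum, nerveSum, sub_eq_add_neg,
    ← Finset.sum_neg_distrib]
  congr 1
  refine Finset.sum_congr rfl fun T hT => ?_
  have hjT : j ∉ T := fun h => hj (Finset.mem_powerset.mp hT h)
  rw [Finset.card_insert_of_notMem hjT, pow_succ, posCone_insert, ← Set.inter_assoc]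
  ring

theorem exists_inner_pos_and_neg_of_inner_eq_zero {O : Set E} (hO : IsOpen O)
    {A : AffineSubspace ℝ E} {z v q : E} (hv : v ∈ A.direction) (hzv : ⟪z, v⟫ ≠ 0)
    (hq : q ∈ O ∩ A) (hzq : ⟪z, q⟫ = 0) :
    (O ∩ A ∩ {a | 0 < ⟪z, a⟫}).Nonempty ∧ (O ∩ A ∩ {a | ⟪z, a⟫ < 0}).Nonempty := by
  set γ : ℝ → E := fun t => q + t • (⟪z, v⟫ • v)
  have hγA : ∀ t, γ t ∈ A := fun t => by
    simpa [γ, add_comm] using A.vadd_mem_of_mem_direction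
      (A.direction.smul_mem t (A.direction.smul_mem _ hv)) hq.2
  have hγz : ∀ t, ⟪z, γ t⟫ = t * ⟪z, v⟫ ^ 2 := fun t => by
    simp only [γ, inner_add_right, hzq, real_inner_smul_right]
    ring
  have hγO : γ ⁻¹' O ∈ nhds 0 :=
    (hO.preimage (by fun_prop)).mem_nhds (by simpa [γ] using hq.1)
  obtain ⟨ε, hε, hball⟩ := Metric.mem_nhds_iff.mp hγO
  have hmem : ∀ t, |t| < ε → γ t ∈ O ∩ A := fun t ht =>
    ⟨hball (by simpa [Real.dist_eq] using ht), hγA t⟩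
  have hsq : 0 < ⟪z, v⟫ ^ 2 := by positivity
  refine ⟨⟨γ (ε / 2), hmem _ ?_, ?_⟩, ⟨γ (-(ε / 2)), hmem _ ?_, ?_⟩⟩
  · rw [abs_of_pos (half_pos hε)]; linarith
  · show 0 < ⟪z, γ (ε / 2)⟫
    rw [hγz]; positivity
  · rw [abs_neg, abs_of_pos (half_pos hε)]; linarith
  · show ⟪z, γ (-(ε / 2))⟫ < 0
    rw [hγz]; nlinarith

theorem ind_nonempty_add_ind_hyperplane {O : Set E} (hO : IsOpen O) (hOc : Convex ℝ O)
    {A : AffineSubspace ℝ E} {z v : E} (hv : v ∈ A.direction) (hzv : ⟪z, v⟫ ≠ 0) :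
    ind (O ∩ A).Nonempty + ind (O ∩ A ∩ {a | ⟪z, a⟫ = 0}).Nonempty =
      ind (O ∩ A ∩ {a | 0 < ⟪z, a⟫}).Nonempty + ind (O ∩ A ∩ {a | ⟪z, a⟫ < 0}).Nonempty := by
  have hsplit : (O ∩ A ∩ {a | ⟪z, a⟫ = 0}).Nonempty →
      (O ∩ A ∩ {a | 0 < ⟪z, a⟫}).Nonempty ∧ (O ∩ A ∩ {a | ⟪z, a⟫ < 0}).Nonempty :=
    fun ⟨q, hq, hzq⟩ => exists_inner_pos_and_neg_of_inner_eq_zero hO hv hzv hq hzq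
  have hivt : (O ∩ A ∩ {a | 0 < ⟪z, a⟫}).Nonempty → (O ∩ A ∩ {a | ⟪z, a⟫ < 0}).Nonempty →
      (O ∩ A ∩ {a | ⟪z, a⟫ = 0}).Nonempty := by
    rintro ⟨p, hp, hzp⟩ ⟨m, hm, hzm⟩
    obtain ⟨q, hq, hzq⟩ := (hOc.inter A.convex).isPreconnected.intermediate_value hm hp
      (by fun_prop : Continuous fun a => ⟪z, a⟫).continuousOn ⟨hzm.le, hzp.le⟩
    exact ⟨q, hq, hzq⟩
  have htri : (O ∩ A).Nonempty ↔ (O ∩ A ∩ {a | 0 < ⟪z, a⟫}).Nonempty ∨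
      (O ∩ A ∩ {a | ⟪z, a⟫ = 0}).Nonempty ∨ (O ∩ A ∩ {a | ⟪z, a⟫ < 0}).Nonempty := by
    constructor
    · rintro ⟨q, hq⟩
      rcases lt_trichotomy 0 ⟪z, q⟫ with h | h | h
      exacts [Or.inl ⟨q, hq, h⟩, Or.inr (Or.inl ⟨q, hq, h.symm⟩), Or.inr (Or.inr ⟨q, hq, h⟩)]
    · rintro (⟨q, hq, -⟩ | ⟨q, hq, -⟩ | ⟨q, hq, -⟩) <;> exact ⟨q, hq⟩
  simp only [ind]
  split_ifs <;> tauto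

theorem nerveSum_add_nerveSum_hyperplane (G : Finset ι) (Y : ι → E) {O : Set E}
    (hO : IsOpen O) (hOc : Convex ℝ O) {A : AffineSubspace ℝ E} {z v : E}
    (hv : v ∈ A.direction) (hzv : ⟪z, v⟫ ≠ 0) :
    nerveSum G Y (O ∩ A) + nerveSum G Y (O ∩ A ∩ {a | ⟪z, a⟫ = 0}) =
      nerveSum G Y (O ∩ A ∩ {a | 0 < ⟪z, a⟫}) + nerveSum G Y (O ∩ A ∩ {a | ⟪z, a⟫ < 0}) := by
  simp only [nerveSum, ← Finset.sum_add_distrib]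
  refine Finset.sum_congr rfl fun T _ => ?_
  have hswap : ∀ S : Set E, O ∩ A ∩ S ∩ posCone Y T = O ∩ posCone Y T ∩ A ∩ S := fun S => by
    ext; simp only [Set.mem_inter_iff]; tauto
  have h := ind_nonempty_add_ind_hyperplane (hO.inter (isOpen_posCone Y T))
    (hOc.inter (convex_posCone Y T)) hv hzv
  rw [hswap, hswap, hswap, Set.inter_right_comm, ← mul_add, ← mul_add, h]

theorem nerveSum_eq_zero_of_forall_exists_inner_pos (G : Finset ι) (Y : ι → E) :
    ∀ {Ω : Set E} {A : AffineSubspace ℝ E}, IsOpen Ω → Convex ℝ Ω →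
      (∀ a ∈ Ω ∩ A, ∃ i ∈ G, 0 < ⟪Y i, a⟫) → nerveSum G Y (Ω ∩ A) = 0 := by
  induction G using Finset.induction_on with
  | empty =>
    intro Ω A _ _ hcov
    have : Ω ∩ A = ∅ := Set.eq_empty_of_forall_notMem fun a ha => by simpa using hcov a ha
    rw [this, nerveSum_empty]
  | insert j G hj ih =>
    intro Ω A hΩ hΩc hcov
    have hcov' : ∀ a ∈ Ω ∩ A, ⟪Y j, a⟫ ≤ 0 → ∃ i ∈ G, 0 < ⟪Y i, a⟫ := fun a ha hja => by
      obtain ⟨i, hi, hia⟩ := hcov a ha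
      rcases Finset.mem_insert.mp hi with rfl | hi
      · exact absurd hia hja.not_gt
      · exact ⟨i, hi, hia⟩
    rw [nerveSum_insert hj]
    by_cases hconst : ∀ v ∈ A.direction, ⟪Y j, v⟫ = 0
    · rcases A.forall_inner_pos_or_forall_inner_nonpos hconst with hpos | hnonpos
      · have hQpos : Ω ∩ A ∩ {a | 0 < ⟪Y j, a⟫} = Ω ∩ A :=
          Set.inter_eq_left.mpr fun a ha => hpos a ha.2
        rw [hQpos, sub_self]
      · have hempty : Ω ∩ A ∩ {a | 0 < ⟪Y j, a⟫} = ∅ :=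
          Set.eq_empty_of_forall_notMem fun a ha => (hnonpos a ha.1.2).not_gt ha.2
        rw [hempty, nerveSum_empty, sub_zero]
        exact ih hΩ hΩc fun a ha => hcov' a ha (hnonpos a ha.2)
    · push Not at hconst
      obtain ⟨v, hv, hjv⟩ := hconst
      have h := nerveSum_add_nerveSum_hyperplane G Y hΩ hΩc hv hjv
      have hneg : nerveSum G Y (Ω ∩ A ∩ {a | ⟪Y j, a⟫ < 0}) = 0 := by
        rw [Set.inter_right_comm]
        refine ih (hΩ.inter (isOpen_lt (by fun_prop) continuous_const))
          (hΩc.inter (convex_halfSpace_lt (innerₛₗ ℝ (Y j)).isLinear 0)) fun a ha => ?_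
        exact hcov' a ⟨ha.1.1, ha.2⟩ ha.1.2.le
      have hzero : nerveSum G Y (Ω ∩ A ∩ {a | ⟪Y j, a⟫ = 0}) = 0 := by
        rw [Set.inter_assoc, ← A.coe_inf_orthogonal_singleton]
        refine ih hΩ hΩc fun a ha => ?_
        rw [A.coe_inf_orthogonal_singleton] at ha
        exact hcov' a ⟨ha.1, ha.2.1⟩ ha.2.2.le
      linarith

theorem nerveSum_inter_submodule_eq_zero {G : Finset ι} {Y : ι → E} {W : Submodule ℝ E}
    (hW : ∀ a ∈ W, (∀ i ∈ G, 0 ≤ ⟪Y i, a⟫) → a = 0) {Ω : Set E} (hΩ : IsOpen Ω)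
    (hΩc : Convex ℝ Ω) (h0 : (0 : E) ∉ Ω) : nerveSum G Y (Ω ∩ W) = 0 := by
  refine nerveSum_eq_zero_of_forall_exists_inner_pos G Y (A := W.toAffineSubspace) hΩ hΩc
    fun a ⟨haΩ, haW⟩ => ?_
  by_contra! h
  have := hW (-a) (W.neg_mem haW) fun i hi => by
    rw [inner_neg_right]
    linarith [h i hi]
  exact h0 (neg_eq_zero.mp this ▸ haΩ)

theorem nerveSum_submodule_eq_neg_one_pow_finrank [FiniteDimensional ℝ E] (G : Finset ι)
    (Y : ι → E) (W : Submodule ℝ E) (hW : ∀ a ∈ W, (∀ i ∈ G, 0 ≤ ⟪Y i, a⟫) → a = 0) :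
    nerveSum G Y W = (-1) ^ Module.finrank ℝ W := by
  induction hm : Module.finrank ℝ W generalizing W with
  | zero =>
    rw [Submodule.finrank_eq_zero.mp hm, Submodule.bot_coe, nerveSum_singleton_zero, pow_zero]
  | succ m ih =>
    obtain ⟨z, hzW, hz⟩ := W.ne_bot_iff.mp fun h => by subst h; simp at hm
    have h := nerveSum_add_nerveSum_hyperplane G Y isOpen_univ convex_univ
      (A := W.toAffineSubspace) (by rwa [Submodule.toAffineSubspace_direction])
      (real_inner_self_pos.mpr hz).ne'
    simp only [Set.univ_inter] at h
    change nerveSum G Y W + nerveSum G Y (W ∩ _) =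
      nerveSum G Y (W ∩ _) + nerveSum G Y (W ∩ _) at h
    have hpos : nerveSum G Y ((W : Set E) ∩ {a | 0 < ⟪z, a⟫}) = 0 := by
      rw [Set.inter_comm]
      exact nerveSum_inter_submodule_eq_zero hW (isOpen_lt continuous_const (by fun_prop))
        (convex_halfSpace_gt (innerₛₗ ℝ z).isLinear 0) (by simp)
    have hneg : nerveSum G Y ((W : Set E) ∩ {a | ⟪z, a⟫ < 0}) = 0 := by
      rw [Set.inter_comm]
      exact nerveSum_inter_submodule_eq_zero hW (isOpen_lt (by fun_prop) continuous_const)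
        (convex_halfSpace_lt (innerₛₗ ℝ z).isLinear 0) (by simp)
    have hzero : nerveSum G Y ((W : Set E) ∩ {a | ⟪z, a⟫ = 0}) = (-1) ^ m := by
      have hW' : (W : Set E) ∩ {a | ⟪z, a⟫ = 0} = ((ℝ ∙ z)ᗮ ⊓ W : Submodule ℝ E) := by
        ext a
        simp [Submodule.mem_orthogonal_singleton_iff_inner_right, and_comm]
      rw [hW']
      refine ih _ (fun a ha => hW a (Submodule.mem_inf.mp ha).2) ?_
      refine Submodule.finrank_add_inf_finrank_orthogonal'
        ((Submodule.span_singleton_le_iff_mem z W).mpr hzW) ?_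
      rw [finrank_span_singleton hz, hm, add_comm]
    rw [hpos, hneg, hzero] at h
    rw [pow_succ]
    linarith

theorem nerveSum_submodule_eq_zero_of_inner_nonneg {G : Finset ι} {Y : ι → E}
    {W : Submodule ℝ E} {a : E} (ha : a ∈ W) (hnonneg : ∀ i ∈ G, 0 ≤ ⟪Y i, a⟫) {j : ι}
    (hj : j ∈ G) (hja : 0 < ⟪Y j, a⟫) : nerveSum G Y W = 0 := by
  rw [← Finset.insert_erase hj, nerveSum_insert (Finset.notMem_erase j G), sub_eq_zero]
  refine Finset.sum_congr rfl fun T hT => ?_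
  refine congrArg _ (ind_congr ⟨?_, fun ⟨b, ⟨hbW, _⟩, hb⟩ => ⟨b, hbW, hb⟩⟩)
  rintro ⟨b, hbW, hb⟩
  set t := (|⟪Y j, b⟫| + 1) / ⟪Y j, a⟫
  have ht : 0 ≤ t := by positivity
  refine ⟨b + t • a, ⟨W.add_mem hbW (W.smul_mem t ha), ?_⟩, fun i hi => ?_⟩
  · show 0 < ⟪Y j, b + t • a⟫
    rw [inner_add_right, real_inner_smul_right, div_mul_cancel₀ _ hja.ne']
    linarith [neg_abs_le ⟪Y j, b⟫]
  · rw [inner_add_right, real_inner_smul_right]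
    have := hnonneg i (Finset.mem_of_mem_erase (Finset.mem_powerset.mp hT hi))
    nlinarith [hb i hi]

theorem ind_mem_convexHull_image [FiniteDimensional ℝ E] (X : ι → E) {x : E}
    (W : Submodule ℝ E) (hW : ∀ i, X i - x ∈ W) (I : Finset ι) :
    ind (x ∈ convexHull ℝ (X '' I)) =
      1 - ind ((W : Set E) ∩ posCone (fun i => X i - x) I).Nonempty := by
  rw [inter_posCone_nonempty_iff W fun i _ => hW i,
    (I.finite_toSet.image X).mem_convexHull_iff_not_exists_inner_pos, ind_not]
  simp only [Set.forall_mem_image]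
  rfl

theorem neg_sum_ind_mem_convexHull_eq_nerveSum [Fintype ι] [Nonempty ι] [FiniteDimensional ℝ E]
    (X : ι → E) {x : E} (W : Submodule ℝ E) (hW : ∀ i, X i - x ∈ W) :
    -∑ I : Finset ι, (-1) ^ I.card * ind (x ∈ convexHull ℝ (X '' I)) =
      nerveSum Finset.univ (fun i => X i - x) W := by
  simp only [ind_mem_convexHull_image X W hW, mul_sub, mul_one, Finset.sum_sub_distrib, nerveSum,
    ← Finset.powerset_univ, Finset.sum_powerset_neg_one_pow_card_of_nonempty Finset.univ_nonempty]
  ring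

theorem nerveSum_eq_neg_one_pow_of_mem_intrinsicInterior [Fintype ι] [FiniteDimensional ℝ E]
    (X : ι → E) {x : E} (hx : x ∈ intrinsicInterior ℝ (convexHull ℝ (Set.range X))) :
    nerveSum Finset.univ (fun i => X i - x) (affineSpan ℝ (convexHull ℝ (Set.range X))).direction =
      (-1) ^ Module.finrank ℝ (affineSpan ℝ (convexHull ℝ (Set.range X))).direction :=
  nerveSum_submodule_eq_neg_one_pow_finrank _ _ _ fun _ ha hpos =>
    eq_zero_of_mem_intrinsicInterior_of_forall_inner_sub_nonneg hx ha <|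
      forall_mem_convexHull_inner_sub_mem (convex_Ici 0) <| by
        rintro _ ⟨i, rfl⟩
        exact hpos i (Finset.mem_univ i)

theorem nerveSum_eq_zero_of_notMem_intrinsicInterior [Fintype ι] [FiniteDimensional ℝ E]
    (X : ι → E) {x : E} (hx : x ∈ convexHull ℝ (Set.range X))
    (hx' : x ∉ intrinsicInterior ℝ (convexHull ℝ (Set.range X))) :
    nerveSum Finset.univ (fun i => X i - x) (affineSpan ℝ (convexHull ℝ (Set.range X))).direction =
      0 := by
  obtain ⟨a, ha, hsupp, ha0⟩ : ∃ a ∈ (affineSpan ℝ (convexHull ℝ (Set.range X))).direction,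
      (∀ y ∈ convexHull ℝ (Set.range X), 0 ≤ ⟪y - x, a⟫) ∧ a ≠ 0 := by
    by_contra! h
    exact hx' ((convex_convexHull ℝ _).mem_intrinsicInterior_of_forall_inner_sub_nonneg hx h)
  have hnonneg : ∀ i, 0 ≤ ⟪X i - x, a⟫ := fun i =>
    hsupp _ (subset_convexHull ℝ _ (Set.mem_range_self i))
  obtain ⟨j, hj⟩ : ∃ j, 0 < ⟪X j - x, a⟫ := by
    by_contra! h
    refine ha0 (eq_zero_of_forall_inner_sub_eq_zero hx ha <|
      forall_mem_convexHull_inner_sub_mem (convex_singleton 0) ?_)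
    rintro _ ⟨i, rfl⟩
    exact le_antisymm (h i) (hnonneg i)
  exact nerveSum_submodule_eq_zero_of_inner_nonneg ha (fun i _ => hnonneg i) (Finset.mem_univ j) hj

theorem sum_Icc_neg_one_pow_mul_ncard [Fintype ι] (P : Finset ι → Prop) (hP : ¬P ∅) :
    ∑ k ∈ Finset.Icc 1 (Fintype.card ι),
        (-1 : ℤ) ^ (k - 1) * ({I : Finset ι | I.card = k ∧ P I}.ncard : ℤ) =
      -∑ I : Finset ι, (-1) ^ I.card * ind (P I) := by
  have hpos : ∀ I ∈ Finset.univ.filter P, 1 ≤ I.card := fun I hI =>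
    Finset.card_pos.mpr <| Finset.nonempty_iff_ne_empty.mpr <| by
      rintro rfl
      exact hP (Finset.mem_filter.mp hI).2
  calc _ = ∑ k ∈ Finset.Icc 1 (Fintype.card ι),
        ∑ I ∈ Finset.univ.filter P with I.card = k, (-1 : ℤ) ^ (I.card - 1) := by
        refine Finset.sum_congr rfl fun k _ => ?_
        rw [Finset.sum_congr rfl fun I hI => by rw [(Finset.mem_filter.mp hI).2],
          Finset.sum_const, nsmul_eq_mul, mul_comm, ← Set.ncard_coe_finset]
        congr 3
        ext I
        simp [and_comm]
    _ = ∑ I ∈ Finset.univ.filter P, (-1 : ℤ) ^ (I.card - 1) :=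
        Finset.sum_fiberwise_of_maps_to
          (fun I hI => Finset.mem_Icc.mpr ⟨hpos I hI, Finset.card_le_univ I⟩) _
    _ = _ := by
        simp only [ind, mul_ite, mul_one, mul_zero, ← Finset.sum_filter, ← Finset.sum_neg_distrib]
        refine Finset.sum_congr rfl fun I hI => ?_
        obtain ⟨k, hk⟩ := Nat.exists_eq_add_of_le' (hpos I hI)
        rw [hk, Nat.add_sub_cancel, pow_succ]
        ring

end Cowan

open Cowan

/-- **Cowan's formula** (Theorem 1.1). For points `X 0, …, X (n-1)` in `ℝ^d` and a point
`x ∈ ℝ^d`, the alternating sum of the numbers `c_k(x)` of `k`-element subcollections whose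
convex hull contains `x` equals `(-1)^{dim Π}` if `x` lies in the relative interior of
`Π = conv(X 0, …, X (n-1))`, and `0` otherwise. -/
theorem cowan_formula (n d : ℕ) (X : Fin n → EuclideanSpace ℝ (Fin d))
    (x : EuclideanSpace ℝ (Fin d)) :
    ∑ k ∈ Finset.Icc 1 n, (-1 : ℤ) ^ (k - 1) *
        ({I : Finset (Fin n) | I.card = k ∧ x ∈ convexHull ℝ (X '' ↑I)}.ncard : ℤ)
      = if x ∈ intrinsicInterior ℝ (convexHull ℝ (Set.range X))
          then (-1 : ℤ) ^ adim (convexHull ℝ (Set.range X)) else 0 := by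
  have hcount := sum_Icc_neg_one_pow_mul_ncard
    (fun I : Finset (Fin n) => x ∈ convexHull ℝ (X '' I)) (by simp)
  rw [Fintype.card_fin] at hcount
  rw [hcount]
  by_cases hx : x ∈ convexHull ℝ (Set.range X)
  · have : Nonempty (Fin n) :=
      Set.range_nonempty_iff_nonempty.mp (convexHull_nonempty_iff.mp ⟨x, hx⟩)
    rw [neg_sum_ind_mem_convexHull_eq_nerveSum X _ fun i =>
      sub_mem_direction_affineSpan (subset_convexHull ℝ _ (Set.mem_range_self i)) hx]
    split_ifs with hrel
    · exact nerveSum_eq_neg_one_pow_of_mem_intrinsicInterior X hrel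
    · exact nerveSum_eq_zero_of_notMem_intrinsicInterior X hx hrel
  · have hI : ∀ I : Finset (Fin n), x ∉ convexHull ℝ (X '' I) := fun I h =>
      hx (convexHull_mono (Set.image_subset_range X I) h)
    have hrel : x ∉ intrinsicInterior ℝ (convexHull ℝ (Set.range X)) := fun h =>
      hx (intrinsicInterior_subset h)
    simp [ind, hI, hrel]
end

section
/- Let X_1,…,X_n be points in ℝ^d and let ∅ ≠ I ⊆ J ⊆ {1,…,n}. Then the following are equivalent: (i) Π_I is a clean face of Π_J, i.e. Π_I is a face of Π_J and Π_I contains none of the points X_k with k ∈ J∖I; (ii) aff(X_i : i ∈ I) ∩ conv(X_k : k ∈ J∖I) = ∅, i.e. the affine hull of the points indexed by I is disjoint from the convex hull of the points indexed by J∖I (with the convention that the convex hull of an empty collection is empty). -/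
open Pointwise

/-- `F` is a face of the polytope `P`: either `F = P` (the improper face), or `F` is the
nonempty intersection of `P` with a hyperplane bounding a closed half-space containing `P`. -/
def IsFace {d : ℕ} (P F : Set (EuclideanSpace ℝ (Fin d))) : Prop :=
  F = P ∨ (F.Nonempty ∧ ∃ (f : EuclideanSpace ℝ (Fin d) →ₗ[ℝ] ℝ) (c : ℝ),
    f ≠ 0 ∧ (∀ x ∈ P, f x ≤ c) ∧ F = {x ∈ P | f x = c})

/-!
Write `S` for the points indexed by `I` and `T` for those indexed by `J \ I`. If `conv S` is cut
out of `conv (S ∪ T)` by a supporting hyperplane `f = c`, then `f = c` on `aff S`, while cleanness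
forces `f < c` on `T` and hence on `conv T`. Conversely, strictly separate the compact set
`conv T` from the closed affine subspace `aff S`: a linear functional bounded below on an affine
subspace is constant on it, so the separating functional is constant on `aff S`, and its level
set there meets `conv (S ∪ T)` exactly in the convex hull of the points of `S ∪ T` on it, which is
`conv S`.
-/

open Set

section
variable {E : Type*} [AddCommGroup E] [Module ℝ E]

theorem LinearMap.sep_convexHull_eq_convexHull_sep {s : Set E} {f : E →ₗ[ℝ] ℝ} {c : ℝ}
    (hs : ∀ y ∈ s, f y ≤ c) :
    {x ∈ convexHull ℝ s | f x = c} = convexHull ℝ {y ∈ s | f y = c} := by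
  refine Subset.antisymm ?_ (convexHull_min (fun y hy => ⟨subset_convexHull ℝ s hy.1, hy.2⟩)
    ((convex_convexHull ℝ s).inter (convex_hyperplane f.isLinear c)))
  rintro x ⟨hx, hfx⟩
  obtain ⟨ι, _, w, z, hw₀, hw₁, hz, rfl⟩ := mem_convexHull_iff_exists_fintype.1 hx
  -- The slacks `c - f (z i)` are nonnegative and their weighted sum is `c - f x = 0`.
  have hslack : ∀ i, w i * (c - f (z i)) = 0 := by
    have hsum : ∑ i, w i * (c - f (z i)) = 0 := by
      simp only [mul_sub, Finset.sum_sub_distrib, ← Finset.sum_mul, hw₁, one_mul, ← hfx,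
        map_sum, map_smul, smul_eq_mul, sub_self]
    exact fun i => (Finset.sum_eq_zero_iff_of_nonneg fun i _ =>
      mul_nonneg (hw₀ i) (sub_nonneg.2 (hs _ (hz i)))).1 hsum i (Finset.mem_univ i)
  rw [← Finset.centerMass_eq_of_sum_1 _ _ hw₁, ← Finset.centerMass_filter_ne_zero]
  refine Finset.centerMass_mem_convexHull _ (fun i _ => hw₀ i) ?_ fun i hi => ⟨hz i, ?_⟩
  · rw [Finset.sum_filter_ne_zero, hw₁]; exact one_pos
  · have hwi := (Finset.mem_filter.1 hi).2
    linarith [(mul_eq_zero.1 (hslack i)).resolve_left hwi]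

theorem AffineSubspace.apply_eq_of_bddBelow_image {A : AffineSubspace ℝ E} {f : E →ₗ[ℝ] ℝ}
    (hA : BddBelow (f '' A)) {p q : E} (hp : p ∈ A) (hq : q ∈ A) : f q = f p := by
  by_contra hne
  obtain ⟨v, hv⟩ := hA
  have hne' : f q - f p ≠ 0 := sub_ne_zero.2 hne
  -- Along the line through `p` and `q`, `f` takes every real value, in particular `v - 1`.
  set t := (v - 1 - f p) / (f q - f p)
  have hz : t • (q -ᵥ p) +ᵥ p ∈ A := A.smul_vsub_vadd_mem t hq hp hp
  have hfz : f (t • (q -ᵥ p) +ᵥ p) = v - 1 := by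
    simp only [vsub_eq_sub, vadd_eq_add, map_add, map_smul, map_sub, smul_eq_mul, t,
      div_mul_cancel₀ _ hne', sub_add_cancel]
  linarith [hv (mem_image_of_mem f hz)]

end

section
variable {d : ℕ}

theorem isFace_convexHull_union {S T : Set (EuclideanSpace ℝ (Fin d))} (hS : S.Nonempty)
    (hT : T.Nonempty) {f : EuclideanSpace ℝ (Fin d) →ₗ[ℝ] ℝ} {c : ℝ}
    (hfS : ∀ x ∈ S, f x = c) (hfT : ∀ x ∈ T, f x < c) :
    IsFace (convexHull ℝ (S ∪ T)) (convexHull ℝ S) := by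
  have hle : ∀ x ∈ S ∪ T, f x ≤ c := by
    rintro x (hx | hx)
    exacts [(hfS x hx).le, (hfT x hx).le]
  have hlevel : {x ∈ S ∪ T | f x = c} = S := by
    ext x
    refine ⟨fun ⟨hx, hfx⟩ => hx.resolve_right fun hxT => (hfT x hxT).ne hfx,
      fun hx => ⟨Or.inl hx, hfS x hx⟩⟩
  refine Or.inr ⟨hS.convexHull, f, c, ?_, fun x hx => ?_, ?_⟩
  · rintro rfl
    obtain ⟨s, hs⟩ := hS
    obtain ⟨t, ht⟩ := hT
    have hs0 := hfS s hs
    have ht0 := hfT t ht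
    rw [LinearMap.zero_apply] at hs0 ht0
    linarith
  · exact convexHull_min hle (convex_halfSpace_le f.isLinear c) hx
  · rw [LinearMap.sep_convexHull_eq_convexHull_sep hle, hlevel]

theorem affineSpan_inter_convexHull_eq_empty_of_isFace {S T : Set (EuclideanSpace ℝ (Fin d))}
    (hface : IsFace (convexHull ℝ (S ∪ T)) (convexHull ℝ S))
    (hclean : ∀ x ∈ T, x ∉ convexHull ℝ S) :
    (affineSpan ℝ S : Set (EuclideanSpace ℝ (Fin d))) ∩ convexHull ℝ T = ∅ := by
  rcases hface with heq | ⟨-, f, c, -, hle, hF⟩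
  · have hT : T = ∅ := eq_empty_of_forall_notMem fun x hx =>
      hclean x hx (heq ▸ subset_convexHull ℝ _ (Or.inr hx))
    simp [hT]
  have hfS : ∀ x ∈ S, f x = c := fun x hx => (hF ▸ subset_convexHull ℝ S hx).2
  have hfA : ∀ x ∈ affineSpan ℝ S, f x = c :=
    AffineMap.eqOn_affineSpan (f := f.toAffineMap) (g := AffineMap.const ℝ _ c) hfS
  have hfT : ∀ x ∈ T, f x < c := fun x hx =>
    (hle x (subset_convexHull ℝ _ (Or.inr hx))).lt_of_ne fun hfx =>
      hclean x hx (hF ▸ ⟨subset_convexHull ℝ _ (Or.inr hx), hfx⟩)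
  have hT : convexHull ℝ T ⊆ {x | f x < c} := convexHull_min hfT (convex_halfSpace_lt f.isLinear c)
  exact eq_empty_of_forall_notMem fun x ⟨hxA, hxT⟩ => (hT hxT).ne (hfA x hxA)

theorem isFace_convexHull_union_of_affineSpan_inter_eq_empty
    {S T : Set (EuclideanSpace ℝ (Fin d))} (hS : S.Nonempty) (hT : T.Finite)
    (h : (affineSpan ℝ S : Set (EuclideanSpace ℝ (Fin d))) ∩ convexHull ℝ T = ∅) :
    IsFace (convexHull ℝ (S ∪ T)) (convexHull ℝ S) := by
  rcases T.eq_empty_or_nonempty with rfl | hTne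
  · exact Or.inl (by rw [union_empty])
  obtain ⟨f, u, v, hfT, huv, hfA⟩ := geometric_hahn_banach_compact_closed
    (convex_convexHull ℝ T) (hT.isCompact_convexHull ℝ) (affineSpan ℝ S).convex
    (affineSpan ℝ S).closed_of_finiteDimensional
    (disjoint_iff_inter_eq_empty.2 (by rwa [inter_comm]))
  obtain ⟨p, hp⟩ := hS
  have hconst : ∀ x ∈ affineSpan ℝ S, f x = f p := fun x hx =>
    AffineSubspace.apply_eq_of_bddBelow_image (f := (f : EuclideanSpace ℝ (Fin d) →ₗ[ℝ] ℝ))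
      ⟨v, by rintro _ ⟨y, hy, rfl⟩; exact (hfA y hy).le⟩ (subset_affineSpan ℝ S hp) hx
  refine isFace_convexHull_union (f := (f : EuclideanSpace ℝ (Fin d) →ₗ[ℝ] ℝ)) ⟨p, hp⟩ hTne
    (fun x hx => hconst x (subset_affineSpan ℝ S hx)) fun x hx => ?_
  rw [ContinuousLinearMap.coe_coe]
  linarith [hfT x (subset_convexHull ℝ T hx), hfA p (subset_affineSpan ℝ S hp)]

theorem isFace_convexHull_union_and_notMem_iff {S T : Set (EuclideanSpace ℝ (Fin d))}
    (hS : S.Nonempty) (hT : T.Finite) :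
    (IsFace (convexHull ℝ (S ∪ T)) (convexHull ℝ S) ∧ ∀ x ∈ T, x ∉ convexHull ℝ S) ↔
      (affineSpan ℝ S : Set (EuclideanSpace ℝ (Fin d))) ∩ convexHull ℝ T = ∅ := by
  refine ⟨fun ⟨hface, hclean⟩ => affineSpan_inter_convexHull_eq_empty_of_isFace hface hclean,
    fun h => ⟨isFace_convexHull_union_of_affineSpan_inter_eq_empty hS hT h, fun x hxT hxS => ?_⟩⟩
  exact (eq_empty_iff_forall_notMem.1 h) x
    ⟨convexHull_subset_affineSpan S hxS, subset_convexHull ℝ T hxT⟩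

end

/-- **Lemma 3.2.** For `∅ ≠ I ⊆ J ⊆ {1,…,n}` the following are equivalent:
(i) `Π_I` is a clean face of `Π_J`, i.e. a face of `Π_J` containing none of the points `X k`
with `k ∈ J \ I`;
(ii) the affine hull of `(X i : i ∈ I)` is disjoint from `conv(X k : k ∈ J \ I)`. -/
theorem clean_face_iff (n d : ℕ) (X : Fin n → EuclideanSpace ℝ (Fin d))
    (I J : Finset (Fin n)) (hI : I.Nonempty) (hIJ : I ⊆ J) :
    (IsFace (convexHull ℝ (X '' ↑J)) (convexHull ℝ (X '' ↑I)) ∧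
        ∀ k ∈ J \ I, X k ∉ convexHull ℝ (X '' ↑I))
      ↔ (↑(affineSpan ℝ (X '' ↑I)) ∩ convexHull ℝ (X '' ↑(J \ I))
          : Set (EuclideanSpace ℝ (Fin d))) = ∅ := by
  have hJ : X '' ↑J = X '' ↑I ∪ X '' ↑(J \ I) := by
    rw [← image_union, Finset.coe_sdiff, union_sdiff_cancel (Finset.coe_subset.2 hIJ)]
  rw [hJ, ← isFace_convexHull_union_and_notMem_iff ((Finset.coe_nonempty.2 hI).image X)
    (toFinite _), forall_mem_image]
  rfl
end
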